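/- arXiv:2307.02611 — 4 statements merged into one kernel-verified Lean document; each statement's English description precedes it below -/
import Mathlib

section
/- Let S : [0,∞) → M_d(ℝ) be a continuous family of real d×d matrices with S_0 equal to the identity matrix, and let f : [0,∞) × ℝ^d → ℂ be jointly continuous with f_t(0) = 1 for every t ≥ 0. Assume that for all s, t ≥ 0 and all ξ ∈ ℝ^d one has f_{t+s}(ξ) = f_s(S_t ξ) · f_t(ξ), and that S_{t+s} ξ = S_s (S_t ξ) whenever f_{t+s}(ξ) ≠ 0. Then there exists a real d×d matrix Z such that S_t = exp(tZ) for all t ≥ 0. -/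
open MeasureTheory Matrix Filter ComplexOrder

/-- The matrix semigroup `S_t = exp (t Z)` generated by a real `d × d` matrix `Z`. -/
noncomputable def expm {d : ℕ} (Z : Matrix (Fin d) (Fin d) ℝ) (t : ℝ) :
    Matrix (Fin d) (Fin d) ℝ :=
  NormedSpace.exp (t • Z)

/-- The Euclidean norm on `ℝ^d`. -/
noncomputable def eucNorm {d : ℕ} (x : Fin d → ℝ) : ℝ :=
  Real.sqrt (∑ i, x i ^ 2)

/-- The characteristic function of a measure on `ℝ^d`. -/
noncomputable def charFun {d : ℕ} (μ : Measure (Fin d → ℝ)) (ξ : Fin d → ℝ) : ℂ :=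
  ∫ x, Complex.exp (Complex.I * ((x ⬝ᵥ ξ : ℝ) : ℂ)) ∂μ

/-- Convolution of two measures on `ℝ^d`. -/
noncomputable def mconv {d : ℕ} (μ ρ : Measure (Fin d → ℝ)) : Measure (Fin d → ℝ) :=
  (μ.prod ρ).map fun p => p.1 + p.2

/-- The `m`-fold convolution power of a measure on `ℝ^d`. -/
noncomputable def convPow {d : ℕ} (ρ : Measure (Fin d → ℝ)) : ℕ → Measure (Fin d → ℝ)
  | 0 => Measure.dirac 0
  | n + 1 => mconv ρ (convPow ρ n)

/-- A probability measure on `ℝ^d` is infinitely divisible if for every `m ≥ 1` it is an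
`m`-fold convolution power of some probability measure. -/
def InfinitelyDivisible {d : ℕ} (μ : Measure (Fin d → ℝ)) : Prop :=
  ∀ m : ℕ, 1 ≤ m → ∃ ρ : Measure (Fin d → ℝ), IsProbabilityMeasure ρ ∧ convPow ρ m = μ

/-- `g : ℝ^d → ℂ` is twisted positive definite with respect to the antisymmetric form `Δ`. -/
def TwistedPosDef {d : ℕ} (Δ : Matrix (Fin d) (Fin d) ℝ) (g : (Fin d → ℝ) → ℂ) : Prop :=
  ∀ (N : ℕ) (ξ : Fin N → (Fin d → ℝ)) (c : Fin N → ℂ),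
    0 ≤ ∑ k : Fin N, ∑ l : Fin N, (starRingEnd ℂ) (c k) * g (ξ l - ξ k) *
      Complex.exp (Complex.I / 2 * (((ξ k) ⬝ᵥ (Δ.mulVec (ξ l)) : ℝ) : ℂ)) * c l

/-- A Lévy measure on `ℝ^d`. -/
def IsLevyMeasure {d : ℕ} (ν : Measure (Fin d → ℝ)) : Prop :=
  ν {0} = 0 ∧
  (∫⁻ η in {η : Fin d → ℝ | eucNorm η < 1}, ENNReal.ofReal (eucNorm η ^ 2) ∂ν) < ⊤ ∧
  ν {η : Fin d → ℝ | 1 ≤ eucNorm η} < ⊤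

/-- The Lévy symbol associated to a generating triplet `(A, ν, α)`. -/
noncomputable def levySymbol {d : ℕ} (α : Fin d → ℝ) (A : Matrix (Fin d) (Fin d) ℝ)
    (ν : Measure (Fin d → ℝ)) (ξ : Fin d → ℝ) : ℂ :=
  Complex.I * ((α ⬝ᵥ ξ : ℝ) : ℂ) - (1 / 2 : ℂ) * ((ξ ⬝ᵥ (A.mulVec ξ) : ℝ) : ℂ) +
    ∫ η, (Complex.exp (Complex.I * ((η ⬝ᵥ ξ : ℝ) : ℂ)) - 1 -
      Complex.I * ((({η : Fin d → ℝ | eucNorm η < 1}).indicator (fun η' => η' ⬝ᵥ ξ) η : ℝ) : ℂ)) ∂ν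

/-- `Ψ` admits the Lévy–Khinchine representation with generating triplet `(A, ν, α)`. -/
def HasTriplet {d : ℕ} (Ψ : (Fin d → ℝ) → ℂ) (A : Matrix (Fin d) (Fin d) ℝ)
    (ν : Measure (Fin d → ℝ)) (α : Fin d → ℝ) : Prop :=
  A.IsSymm ∧ A.PosSemidef ∧ ν {0} = 0 ∧
  (∫⁻ η, ENNReal.ofReal (min (eucNorm η ^ 2) 1) ∂ν) < ⊤ ∧
  ∀ ξ, Ψ ξ = levySymbol α A ν ξ


/-! A continuous semigroup `g` in a Banach algebra is differentiable: averaging over `[0, ε]`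
gives `g t * V = ∫ u in t..t + ε, g u` with `V = ∫ u in 0..ε, g u`, which is invertible for small
`ε > 0` since `ε⁻¹ • V → g 0 = 1`. So `g t = (∫ u in t..t + ε, g u) * V⁻¹` solves `g' = z * g` with
`z = (g ε - 1) * V⁻¹`, and ODE uniqueness identifies it with `t ↦ exp (t • z)`. For the matrices
`S_t`, the composition law holds on the neighbourhood of `0` where `f_{t+s}` does not vanish,
hence everywhere by linearity, so `S` is such a semigroup. -/

open Set Topology

theorem LinearMap.eq_of_eventuallyEq_nhds_zero {𝕜 E F : Type*} [NontriviallyNormedField 𝕜]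
    [AddCommGroup E] [Module 𝕜 E] [TopologicalSpace E] [ContinuousSMul 𝕜 E]
    [AddCommGroup F] [Module 𝕜 F] {f g : E →ₗ[𝕜] F} (h : f =ᶠ[𝓝 0] g) : f = g := by
  ext ξ
  have hsmul : Tendsto (fun c : 𝕜 => c • ξ) (𝓝[≠] 0) (𝓝 0) := by
    simpa using (tendsto_id.smul_const ξ).mono_left (nhdsWithin_le_nhds (a := (0 : 𝕜)))
  obtain ⟨c, hfg, hc⟩ := ((hsmul.eventually h).and self_mem_nhdsWithin).exists
  simp only [map_smul] at hfg
  exact smul_right_injective F hc hfg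

theorem Matrix.eq_of_mulVec_eventuallyEq {𝕜 m n : Type*} [NontriviallyNormedField 𝕜]
    [Fintype n] [DecidableEq n] {A B : Matrix m n 𝕜} (h : ∀ᶠ ξ in 𝓝 0, A *ᵥ ξ = B *ᵥ ξ) : A = B :=
  Matrix.toLin'.injective <| LinearMap.eq_of_eventuallyEq_nhds_zero <| by
    simpa only [Filter.EventuallyEq, Matrix.toLin'_apply] using h

theorem hasDerivAt_intervalIntegral_add_const {E : Type*} [NormedAddCommGroup E]
    [NormedSpace ℝ E] [CompleteSpace E] {G : ℝ → E} (hG : Continuous G) (ε t : ℝ) :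
    HasDerivAt (fun s => ∫ u in s..s + ε, G u) (G (t + ε) - G t) t := by
  have hF (a : ℝ) : HasDerivAt (fun s => ∫ u in (0 : ℝ)..s, G u) (G a) a :=
    (hG.integral_hasStrictDerivAt 0 a).hasDerivAt
  have hsplit : (fun s => ∫ u in s..s + ε, G u) =
      fun s => (∫ u in (0 : ℝ)..s + ε, G u) - ∫ u in (0 : ℝ)..s, G u := by
    funext s
    exact (intervalIntegral.integral_interval_sub_left (hG.intervalIntegrable _ _)
      (hG.intervalIntegrable _ _)).symm
  rw [hsplit]
  exact ((hF (t + ε)).comp_add_const t ε).sub (hF t)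

section BanachAlgebra

variable {A : Type*} [NormedRing A] [NormedAlgebra ℝ A] [CompleteSpace A]

theorem eq_exp_smul_of_hasDerivAt_mul {h : ℝ → A} {z : A}
    (hderiv : ∀ t, 0 ≤ t → HasDerivAt h (z * h t) t) (h0 : h 0 = 1) {t : ℝ} (ht : 0 ≤ t) :
    h t = NormedSpace.exp (t • z) := by
  have hexp (s : ℝ) : HasDerivAt (fun u : ℝ => NormedSpace.exp (u • z))
      (z * NormedSpace.exp (s • z)) s :=
    hasDerivAt_exp_smul_const' z s
  refine ODE_solution_unique (v := fun _ x => z * x)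
    (fun _ => (ContinuousLinearMap.mul ℝ A z).lipschitz)
    (fun s hs => (hderiv s hs.1).continuousAt.continuousWithinAt)
    (fun s hs => (hderiv s hs.1).hasDerivWithinAt)
    (fun s _ => (hexp s).continuousAt.continuousWithinAt)
    (fun s _ => (hexp s).hasDerivWithinAt)
    (by simp [h0]) ⟨ht, le_rfl⟩

theorem exists_isUnit_intervalIntegral {G : ℝ → A} (hG : Continuous G) (hG0 : G 0 = 1) :
    ∃ ε > 0, IsUnit (∫ u in (0 : ℝ)..ε, G u) := by
  set F : ℝ → A := fun s => ∫ u in (0 : ℝ)..s, G u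
  have hslope : Tendsto (slope F 0) (𝓝[>] 0) (𝓝 1) := by
    rw [← hG0]
    exact (hasDerivAt_iff_tendsto_slope.mp (hG.integral_hasStrictDerivAt 0 0).hasDerivAt).mono_left
      (nhdsWithin_mono _ fun s hs => ne_of_gt hs)
  obtain ⟨ε, hunit, hε⟩ :=
    ((hslope.eventually (Units.nhds (1 : Aˣ))).and self_mem_nhdsWithin).exists
  refine ⟨ε, hε, ?_⟩
  have hF : F ε = ε • slope F 0 ε := by
    simp [slope_def_module, F, smul_smul, mul_inv_cancel₀ (ne_of_gt hε)]
  rw [show (∫ u in (0 : ℝ)..ε, G u) = F ε from rfl, hF]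
  exact hunit.smul (Units.mk0 ε (ne_of_gt hε))

section Semigroup

variable {G : ℝ → A}

theorem mul_intervalIntegral_of_semigroup (hG : Continuous G)
    (hmul : ∀ s t, 0 ≤ s → 0 ≤ t → G (t + s) = G s * G t) {ε t : ℝ} (hε : 0 ≤ ε) (ht : 0 ≤ t) :
    G t * ∫ u in (0 : ℝ)..ε, G u = ∫ u in t..t + ε, G u := by
  refine ((ContinuousLinearMap.mul ℝ A (G t)).intervalIntegral_comp_comm
    (hG.intervalIntegrable _ _)).symm.trans ?_
  calc ∫ u in (0 : ℝ)..ε, G t * G u = ∫ u in (0 : ℝ)..ε, G (u + t) :=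
        intervalIntegral.integral_congr fun u hu => by
          rw [uIcc_of_le hε] at hu
          exact (hmul t u ht hu.1).symm
    _ = ∫ u in t..t + ε, G u := by
        rw [intervalIntegral.integral_comp_add_right, zero_add, add_comm]

theorem intervalIntegral_mul_of_semigroup (hG : Continuous G)
    (hmul : ∀ s t, 0 ≤ s → 0 ≤ t → G (t + s) = G s * G t) {ε t : ℝ} (hε : 0 ≤ ε) (ht : 0 ≤ t) :
    (∫ u in (0 : ℝ)..ε, G u) * G t = ∫ u in t..t + ε, G u := by
  refine (((ContinuousLinearMap.mul ℝ A).flip (G t)).intervalIntegral_comp_comm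
    (hG.intervalIntegrable _ _)).symm.trans ?_
  calc ∫ u in (0 : ℝ)..ε, G u * G t = ∫ u in (0 : ℝ)..ε, G (u + t) :=
        intervalIntegral.integral_congr fun u hu => by
          rw [uIcc_of_le hε] at hu
          exact (hmul u t hu.1 ht).symm.trans (congrArg G (add_comm t u))
    _ = ∫ u in t..t + ε, G u := by
        rw [intervalIntegral.integral_comp_add_right, zero_add, add_comm]

end Semigroup

theorem exists_eq_exp_smul_of_semigroup {g : ℝ → A} (hg : ContinuousOn g (Ici 0)) (hg0 : g 0 = 1)
    (hmul : ∀ s t, 0 ≤ s → 0 ≤ t → g (t + s) = g s * g t) :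
    ∃ z : A, ∀ t, 0 ≤ t → g t = NormedSpace.exp (t • z) := by
  set G : ℝ → A := fun t => g (max t 0)
  have hGg {t : ℝ} (ht : 0 ≤ t) : G t = g t := by simp only [G, max_eq_left ht]
  have hGc : Continuous G :=
    hg.comp_continuous (continuous_id.max continuous_const) fun t => le_max_right t 0
  have hGmul : ∀ s t, 0 ≤ s → 0 ≤ t → G (t + s) = G s * G t := fun s t hs ht => by
    rw [hGg hs, hGg ht, hGg (add_nonneg ht hs), hmul s t hs ht]
  obtain ⟨ε, hε, V, hV⟩ := exists_isUnit_intervalIntegral hGc (by rw [hGg le_rfl, hg0])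
  set h : ℝ → A := fun t => (∫ u in t..t + ε, G u) * ↑V⁻¹
  have hgh {t : ℝ} (ht : 0 ≤ t) : g t = h t := by
    rw [← hGg ht]
    show G t = (∫ u in t..t + ε, G u) * ↑V⁻¹
    rw [← mul_intervalIntegral_of_semigroup hGc hGmul hε.le ht, ← hV,
      Units.mul_inv_cancel_right]
  have hcomm {t : ℝ} (ht : 0 ≤ t) : Commute (g t) ↑V⁻¹ := by
    refine Commute.units_inv_right ?_
    rw [← hGg ht, Commute, SemiconjBy, hV, mul_intervalIntegral_of_semigroup hGc hGmul hε.le ht,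
      intervalIntegral_mul_of_semigroup hGc hGmul hε.le ht]
  refine ⟨(g ε - 1) * ↑V⁻¹, fun t ht => ?_⟩
  rw [hgh ht]
  refine eq_exp_smul_of_hasDerivAt_mul (fun s hs => ?_) (by rw [← hgh le_rfl, hg0]) ht
  convert (hasDerivAt_intervalIntegral_add_const hGc ε s).mul_const (↑V⁻¹ : A) using 1
  rw [hGg (add_nonneg hs hε.le), hGg hs, hmul ε s hε.le hs, ← hgh hs, mul_assoc,
    ← (hcomm hs).eq, ← mul_assoc, sub_mul, one_mul]

end BanachAlgebra

-- `NormedSpace.exp` only depends on the topology, so any submultiplicative matrix norm will do.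
attribute [local instance] Matrix.linftyOpNormedRing Matrix.linftyOpNormedAlgebra

theorem stmt0_general (d : ℕ)
    (S : ℝ → Matrix (Fin d) (Fin d) ℝ) (f : ℝ → (Fin d → ℝ) → ℂ)
    (hScont : ContinuousOn S (Set.Ici 0))
    (hS0 : S 0 = 1)
    (hfcont : ContinuousOn (fun p : ℝ × (Fin d → ℝ) => f p.1 p.2) {p | 0 ≤ p.1})
    (hfnorm : ∀ t : ℝ, 0 ≤ t → f t 0 = 1)
    (hcomp : ∀ s t : ℝ, 0 ≤ s → 0 ≤ t → ∀ ξ : Fin d → ℝ, f (t + s) ξ ≠ 0 →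
      (S (t + s)).mulVec ξ = (S s).mulVec ((S t).mulVec ξ)) :
    ∃ Z : Matrix (Fin d) (Fin d) ℝ, ∀ t : ℝ, 0 ≤ t → S t = expm Z t := by
  have hSmul : ∀ s t : ℝ, 0 ≤ s → 0 ≤ t → S (t + s) = S s * S t := by
    intro s t hs ht
    have hf : Continuous (f (t + s)) :=
      hfcont.comp_continuous (continuous_const.prodMk continuous_id) fun _ => add_nonneg ht hs
    have hf0 : ∀ᶠ ξ in 𝓝 0, f (t + s) ξ ≠ 0 :=
      hf.continuousAt.eventually_ne (by rw [hfnorm _ (add_nonneg ht hs)]; exact one_ne_zero)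
    exact Matrix.eq_of_mulVec_eventuallyEq <| hf0.mono fun ξ hξ => by
      rw [hcomp s t hs ht ξ hξ, Matrix.mulVec_mulVec]
  exact exists_eq_exp_smul_of_semigroup hScont hS0 hSmul

/-- a continuous family of matrices `S_t` compatible with a noise function `f_t`
(with `f_t(0) = 1`, the product formula, and the composition law wherever `f` does not vanish)
is necessarily a matrix exponential semigroup. -/
theorem stmt0 (d : ℕ) (hd : 0 < d)
    (S : ℝ → Matrix (Fin d) (Fin d) ℝ) (f : ℝ → (Fin d → ℝ) → ℂ)
    (hScont : ContinuousOn S (Set.Ici 0))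
    (hS0 : S 0 = 1)
    (hfcont : ContinuousOn (fun p : ℝ × (Fin d → ℝ) => f p.1 p.2) {p | 0 ≤ p.1})
    (hfnorm : ∀ t : ℝ, 0 ≤ t → f t 0 = 1)
    (hprod : ∀ s t : ℝ, 0 ≤ s → 0 ≤ t → ∀ ξ : Fin d → ℝ,
      f (t + s) ξ = f s ((S t).mulVec ξ) * f t ξ)
    (hcomp : ∀ s t : ℝ, 0 ≤ s → 0 ≤ t → ∀ ξ : Fin d → ℝ, f (t + s) ξ ≠ 0 →
      (S (t + s)).mulVec ξ = (S s).mulVec ((S t).mulVec ξ)) :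
    ∃ Z : Matrix (Fin d) (Fin d) ℝ, ∀ t : ℝ, 0 ≤ t → S t = expm Z t :=
  stmt0_general d S f hScont hS0 hfcont hfnorm hcomp
end

section
/- Let Z be a real d×d matrix, σ a real antisymmetric d×d matrix, t ≥ 0, and ξ, η ∈ ℝ^d. Then the limit as m → ∞ of the product ∏_{l=1}^{m} cos( (1/2) · (exp(((l−1)t/m)Z) ξ)ᵀ · (σ − exp((t/m)Zᵀ) σ exp((t/m)Z)) · exp(((l−1)t/m)Z) η ) equals 1. -/
open MeasureTheory Matrix Filter ComplexOrder

/-!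
Writing `φ s = (e^{sZ} ξ)ᵀ σ (e^{sZ} η)`, the identities `e^{hZᵀ} = (e^{hZ})ᵀ` and
`e^{hZ} e^{sZ} = e^{(h+s)Z}` turn the `l`-th cosine argument into
`½ (φ (l t / m) - φ ((l + 1) t / m))`. Since `φ` is smooth, it is Lipschitz on `[-|t|, |t|]`, so
every argument is `O(1/m)`, every factor is `1 - O(1/m²)`, and the product of `m` factors tends
to `1`.
-/

open Set

theorem tendsto_prod_of_tendsto_sum_norm_sub_one {α ι R : Type*} [NormedCommRing R]
    [NormOneClass R] {l : Filter α} {s : α → Finset ι} {f : α → ι → R}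
    (h : Tendsto (fun a => ∑ i ∈ s a, ‖f a i - 1‖) l (nhds 0)) :
    Tendsto (fun a => ∏ i ∈ s a, f a i) l (nhds 1) := by
  rw [tendsto_iff_norm_sub_tendsto_zero]
  have hexp : Tendsto (fun a => Real.exp (∑ i ∈ s a, ‖f a i - 1‖) - 1) l (nhds 0) := by
    simpa using ((Real.continuous_exp.tendsto 0).comp h).sub_const 1
  refine squeeze_zero (fun _ => norm_nonneg _) (fun a => ?_) hexp
  simpa using Finset.norm_prod_one_add_sub_one_le (s a) (fun i => f a i - 1)

theorem Real.abs_cos_sub_one_le (x : ℝ) : |Real.cos x - 1| ≤ x ^ 2 / 2 := by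
  rw [abs_sub_comm, abs_of_nonneg (sub_nonneg.mpr (Real.cos_le_one x))]
  linarith [Real.one_sub_sq_div_two_le_cos (x := x)]

theorem tendsto_prod_cos_of_abs_le_div (x : ℕ → ℕ → ℝ) (C : ℝ)
    (hx : ∀ m, ∀ l < m, |x m l| ≤ C / m) :
    Tendsto (fun m => ∏ l ∈ Finset.range m, Real.cos (x m l)) atTop (nhds 1) := by
  refine tendsto_prod_of_tendsto_sum_norm_sub_one <| squeeze_zero (fun _ => by positivity)
    (fun m => ?_) (tendsto_const_div_atTop_nhds_zero_nat (C ^ 2 / 2))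
  calc ∑ l ∈ Finset.range m, ‖Real.cos (x m l) - 1‖
      ≤ ∑ l ∈ Finset.range m, (C / m) ^ 2 / 2 := by
        refine Finset.sum_le_sum fun l hl => (Real.abs_cos_sub_one_le _).trans ?_
        have hxml := abs_le.mp (hx m l (Finset.mem_range.mp hl))
        gcongr ?_ / 2
        exact sq_le_sq' hxml.1 hxml.2
    _ = C ^ 2 / 2 / m := by
        rcases Nat.eq_zero_or_pos m with rfl | hm
        · simp
        · rw [Finset.sum_const, Finset.card_range, nsmul_eq_mul]
          field_simp

theorem natCast_mul_div_mem_Icc {k m : ℕ} (hk : k ≤ m) (t : ℝ) :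
    (k : ℝ) * t / m ∈ Icc (-|t|) |t| := by
  rw [mem_Icc, ← abs_le, abs_div, abs_mul, Nat.abs_cast, Nat.abs_cast]
  rcases Nat.eq_zero_or_pos m with rfl | hm
  · simp
  · rw [div_le_iff₀ (by positivity), mul_comm]
    gcongr

theorem tendsto_prod_cos_half_sub_of_lipschitzOnWith {φ : ℝ → ℝ} {K : NNReal} {t : ℝ}
    (hφ : LipschitzOnWith K φ (Icc (-|t|) |t|)) :
    Tendsto (fun m : ℕ => ∏ l ∈ Finset.range m,
      Real.cos (1 / 2 * (φ (l * t / m) - φ (t / m + l * t / m)))) atTop (nhds 1) := by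
  refine tendsto_prod_cos_of_abs_le_div _ (K * |t| / 2) fun m l hl => ?_
  have hstep : t / m + l * t / m = ((l + 1 : ℕ) : ℝ) * t / m := by push_cast; ring
  have hgap : (l : ℝ) * t / m - ((l + 1 : ℕ) : ℝ) * t / m = -(t / m) := by push_cast; ring
  have hdist := hφ.dist_le_mul _ (natCast_mul_div_mem_Icc hl.le t) _
    (natCast_mul_div_mem_Icc hl t)
  rw [Real.dist_eq, Real.dist_eq, hgap, abs_neg, abs_div, Nat.abs_cast] at hdist
  rw [hstep, abs_mul, abs_of_pos (by norm_num : (0 : ℝ) < 1 / 2)]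
  calc 1 / 2 * |φ (l * t / m) - φ (((l + 1 : ℕ) : ℝ) * t / m)| ≤ 1 / 2 * (K * (|t| / m)) := by
        gcongr
    _ = K * |t| / 2 / m := by ring

section Semigroup

variable {d : ℕ} (Z : Matrix (Fin d) (Fin d) ℝ)

theorem expm_add (s u : ℝ) : expm Z (s + u) = expm Z s * expm Z u := by
  rw [expm, add_smul, Matrix.exp_add_of_commute _ _ ((Commute.refl Z).smul_left s |>.smul_right u)]
  rfl

theorem expm_transpose (s : ℝ) : expm Zᵀ s = (expm Z s)ᵀ := by
  rw [expm, expm, ← Matrix.exp_transpose, transpose_smul]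

open scoped Norms.Operator in
theorem contDiff_expm_apply (i j : Fin d) {n : WithTop ℕ∞} :
    ContDiff ℝ n (fun s => expm Z s i j) := by
  have hexp : ContDiff ℝ n (NormedSpace.exp : Matrix (Fin d) (Fin d) ℝ → _) :=
    AnalyticOnNhd.contDiff fun x _ => NormedSpace.exp_analytic x
  exact (LinearMap.toContinuousLinearMap (entryLinearMap ℝ ℝ i j)).contDiff.comp
    (hexp.comp (contDiff_id.smul contDiff_const))

theorem contDiff_expm_mulVec_dotProduct (σ : Matrix (Fin d) (Fin d) ℝ) (ξ η : Fin d → ℝ)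
    {n : WithTop ℕ∞} :
    ContDiff ℝ n (fun s => (expm Z s *ᵥ ξ) ⬝ᵥ (σ *ᵥ (expm Z s *ᵥ η))) := by
  have := contDiff_expm_apply Z (n := n)
  simp only [dotProduct, mulVec]
  fun_prop

end Semigroup

theorem dotProduct_sub_transpose_mul_mul_mulVec {n R : Type*} [Fintype n] [CommRing R]
    (σ S T : Matrix n n R) (ξ η : n → R) :
    (S *ᵥ ξ) ⬝ᵥ ((σ - Tᵀ * σ * T) *ᵥ (S *ᵥ η)) =
      (S *ᵥ ξ) ⬝ᵥ (σ *ᵥ (S *ᵥ η)) - ((T * S) *ᵥ ξ) ⬝ᵥ (σ *ᵥ ((T * S) *ᵥ η)) := by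
  simp only [sub_mulVec, dotProduct_sub, ← mulVec_mulVec, dotProduct_transpose_mulVec]
  rw [dotProduct_comm (σ *ᵥ _)]

theorem stmt2_general (d : ℕ) (Z σ : Matrix (Fin d) (Fin d) ℝ)
    (t : ℝ) (ξ η : Fin d → ℝ) :
    Tendsto (fun m : ℕ => ∏ l ∈ Finset.range m,
        Real.cos ((1 / 2) *
          (((expm Z ((l : ℝ) * t / (m : ℝ))).mulVec ξ) ⬝ᵥ
            ((σ - (expm Zᵀ (t / (m : ℝ))) * σ * (expm Z (t / (m : ℝ)))).mulVec
              ((expm Z ((l : ℝ) * t / (m : ℝ))).mulVec η)))))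
      atTop (nhds 1) := by
  obtain ⟨K, hK⟩ := (contDiff_expm_mulVec_dotProduct Z σ ξ η (n := 1)).contDiffOn
    |>.exists_lipschitzOnWith one_ne_zero (convex_Icc (-|t|) |t|) isCompact_Icc
  convert tendsto_prod_cos_half_sub_of_lipschitzOnWith hK using 6 with m l
  rw [expm_transpose, dotProduct_sub_transpose_mul_mul_mulVec, ← expm_add]

/-- the product of the twisting cosines converges to `1` as `m → ∞`. -/
theorem stmt2 (d : ℕ) (hd : 0 < d) (Z σ : Matrix (Fin d) (Fin d) ℝ) (hσ : σᵀ = -σ)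
    (t : ℝ) (ht : 0 ≤ t) (ξ η : Fin d → ℝ) :
    Tendsto (fun m : ℕ => ∏ l ∈ Finset.range m,
        Real.cos ((1 / 2) *
          (((expm Z ((l : ℝ) * t / (m : ℝ))).mulVec ξ) ⬝ᵥ
            ((σ - (expm Zᵀ (t / (m : ℝ))) * σ * (expm Z (t / (m : ℝ)))).mulVec
              ((expm Z ((l : ℝ) * t / (m : ℝ))).mulVec η)))))
      atTop (nhds 1) :=
  stmt2_general d Z σ t ξ η
end

section
/- Let Z be a real d×d matrix, set S_t := exp(tZ), and let σ be a real antisymmetric d×d matrix. Let f : [0,∞) × ℝ^d → ℂ be jointly continuous with f_0(ξ) = 1 and f_t(0) = 1 for all t ≥ 0, ξ ∈ ℝ^d, satisfying the product formula f_{t+s}(ξ) = f_s(S_t ξ) · f_t(ξ) for all s,t ≥ 0 and ξ ∈ ℝ^d. Assume that for every t ≥ 0 the function f_t is twisted positive definite with respect to the antisymmetric matrix σ − S_tᵀ σ S_t. Then for every t ≥ 0 the function f_t is positive definite: for every N, all ξ¹,…,ξᴺ ∈ ℝ^d, and all c ∈ ℂ^N, the sum ∑_{k,l=1}^N conj(c_k)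 · f_t(ξ^l − ξ^k) · c_l is a nonnegative real number. -/
open MeasureTheory Matrix Filter ComplexOrder

/-!
Put `s = t / (2m)` and `Δ_s = σ - S_sᵀ σ S_s`. Twisted positive definiteness is preserved by
Schur products (the twists add), by linear substitutions `ξ ↦ A ξ` (the twist becomes `Aᵀ Δ A`)
and, for antisymmetric twists, by reversing the sign of the twist. Since
`f_{2s}(ξ) = f_s(S_s ξ) f_s(ξ)`, the function `f_{2s}` is twisted positive definite for
`Δ_s - S_sᵀ Δ_s S_s`, a second difference of `u ↦ S_uᵀ σ S_u` and hence `O(s²)`. Iterating the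
product formula `m` times, `f_t` is twisted positive definite for a twist of size
`O(m s²) = O(t² / m)`. For fixed `g` the twists `Δ` making `g` twisted positive definite form a
closed set, so letting `m → ∞` yields the twist `0`, which is positive definiteness.
-/

namespace Matrix

lemma posSemidef_of_forall_dotProduct_mulVec_nonneg {n : Type*} [Fintype n] [DecidableEq n]
    {M : Matrix n n ℂ} (hM : ∀ x, 0 ≤ star x ⬝ᵥ M *ᵥ x) : M.PosSemidef := by
  rw [← isPositive_toEuclideanLin_iff, LinearMap.isPositive_iff_complex]
  intro x
  have hx : x.ofLp ⬝ᵥ star (M *ᵥ x.ofLp) = star (star x.ofLp ⬝ᵥ M *ᵥ x.ofLp) := by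
    rw [star_dotProduct, star_star, dotProduct_comm]
  obtain ⟨hre, him⟩ := Complex.le_def.mp (hM x.ofLp)
  simp only [toLpLin_apply, EuclideanSpace.inner_eq_star_dotProduct, hx, Complex.star_def]
  exact ⟨Complex.ext (by simp) (by simp [← him]), by simpa using hre⟩

lemma star_dotProduct_mulVec_eq_sum {n : Type*} [Fintype n] (M : Matrix n n ℂ) (c : n → ℂ) :
    star c ⬝ᵥ M *ᵥ c = ∑ k, ∑ l, (starRingEnd ℂ) (c k) * M k l * c l := by
  simp only [dotProduct, mulVec, Finset.mul_sum, Pi.star_apply, Complex.star_def, mul_assoc]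

end Matrix

def congrDefect {n R : Type*} [Fintype n] [CommRing R] (S P : Matrix n n R) : Matrix n n R :=
  P - Sᵀ * P * S

lemma transpose_congrDefect {n R : Type*} [Fintype n] [CommRing R] (S P : Matrix n n R) :
    (congrDefect S P)ᵀ = congrDefect S Pᵀ := by
  simp [congrDefect, Matrix.transpose_mul, Matrix.mul_assoc]

lemma congrDefect_neg {n R : Type*} [Fintype n] [CommRing R] (S P : Matrix n n R) :
    congrDefect S (-P) = -congrDefect S P := by
  simp only [congrDefect, Matrix.mul_neg, Matrix.neg_mul]; abel

section

variable {d : ℕ}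

noncomputable def twistedKernel (Δ : Matrix (Fin d) (Fin d) ℝ) (g : (Fin d → ℝ) → ℂ) {N : ℕ}
    (ξ : Fin N → Fin d → ℝ) : Matrix (Fin N) (Fin N) ℂ :=
  Matrix.of fun k l => g (ξ l - ξ k) * Complex.exp (Complex.I / 2 * ((ξ k ⬝ᵥ Δ *ᵥ ξ l : ℝ) : ℂ))

lemma twistedPosDef_iff_posSemidef {Δ : Matrix (Fin d) (Fin d) ℝ} {g : (Fin d → ℝ) → ℂ} :
    TwistedPosDef Δ g ↔ ∀ (N : ℕ) (ξ : Fin N → Fin d → ℝ), (twistedKernel Δ g ξ).PosSemidef := by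
  have hsum : ∀ (N : ℕ) (ξ : Fin N → Fin d → ℝ) (c : Fin N → ℂ),
      star c ⬝ᵥ twistedKernel Δ g ξ *ᵥ c = ∑ k, ∑ l, (starRingEnd ℂ) (c k) * g (ξ l - ξ k) *
        Complex.exp (Complex.I / 2 * (((ξ k) ⬝ᵥ (Δ.mulVec (ξ l)) : ℝ) : ℂ)) * c l := by
    intro N ξ c
    simp only [Matrix.star_dotProduct_mulVec_eq_sum, twistedKernel, Matrix.of_apply, mul_assoc]
  refine ⟨fun h N ξ => Matrix.posSemidef_of_forall_dotProduct_mulVec_nonneg fun c => ?_,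
    fun h N ξ c => ?_⟩
  · rw [hsum]; exact h N ξ c
  · rw [← hsum]; exact (h N ξ).dotProduct_mulVec_nonneg c

lemma twistedPosDef_zero_one : TwistedPosDef (0 : Matrix (Fin d) (Fin d) ℝ) 1 := by
  intro N ξ c
  have h : ∑ k, ∑ l, (starRingEnd ℂ) (c k) * c l = (starRingEnd ℂ) (∑ k, c k) * ∑ l, c l := by
    rw [map_sum, Finset.sum_mul_sum]
  simp only [Pi.one_apply, mul_one, Matrix.zero_mulVec, dotProduct_zero, Complex.ofReal_zero,
    mul_zero, Complex.exp_zero, h, Complex.conj_mul']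
  positivity

namespace TwistedPosDef

variable {Δ Δ₁ Δ₂ : Matrix (Fin d) (Fin d) ℝ} {g g₁ g₂ : (Fin d → ℝ) → ℂ}

lemma mul (h₁ : TwistedPosDef Δ₁ g₁) (h₂ : TwistedPosDef Δ₂ g₂) :
    TwistedPosDef (Δ₁ + Δ₂) (g₁ * g₂) := by
  rw [twistedPosDef_iff_posSemidef] at *
  intro N ξ
  have hker :
      twistedKernel (Δ₁ + Δ₂) (g₁ * g₂) ξ = twistedKernel Δ₁ g₁ ξ ⊙ twistedKernel Δ₂ g₂ ξ := by
    ext k l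
    simp only [twistedKernel, Matrix.of_apply, Matrix.hadamard_apply, Pi.mul_apply,
      Matrix.add_mulVec, dotProduct_add, Complex.ofReal_add, mul_add, Complex.exp_add]
    ring
  rw [hker]
  exact (h₁ N ξ).hadamard (h₂ N ξ)

lemma comp_mulVec (h : TwistedPosDef Δ g) (A : Matrix (Fin d) (Fin d) ℝ) :
    TwistedPosDef (Aᵀ * Δ * A) (fun ξ => g (A *ᵥ ξ)) := by
  intro N ξ c
  refine (h N (fun k => A *ᵥ ξ k) c).trans_eq ?_
  refine Finset.sum_congr rfl fun k _ => Finset.sum_congr rfl fun l _ => ?_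
  rw [← Matrix.mulVec_mulVec, ← Matrix.mulVec_mulVec, Matrix.dotProduct_transpose_mulVec,
    dotProduct_comm]
  simp only [Matrix.mulVec_sub]

lemma neg (h : TwistedPosDef Δ g) (hΔ : Δᵀ = -Δ) : TwistedPosDef (-Δ) g := by
  rw [twistedPosDef_iff_posSemidef] at *
  intro N ξ
  have hker : twistedKernel (-Δ) g ξ = (twistedKernel Δ g (-ξ))ᵀ := by
    ext k l
    rw [twistedKernel, twistedKernel, Matrix.transpose_apply, Matrix.of_apply, Matrix.of_apply,
      ← hΔ, Matrix.dotProduct_transpose_mulVec]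
    simp only [Pi.neg_apply, neg_sub_neg, Matrix.mulVec_neg, dotProduct_neg, neg_dotProduct,
      neg_neg]
  rw [hker]
  exact (h N (-ξ)).transpose

lemma comp_mulVec_mul_self (h : TwistedPosDef Δ g) (hΔ : Δᵀ = -Δ) (S : Matrix (Fin d) (Fin d) ℝ) :
    TwistedPosDef (congrDefect S Δ) (fun ξ => g (S *ᵥ ξ) * g ξ) := by
  have hsum : congrDefect S Δ = Sᵀ * -Δ * S + Δ := by
    simp only [congrDefect, Matrix.mul_neg, Matrix.neg_mul]; abel
  rw [hsum]
  exact ((h.neg hΔ).comp_mulVec S).mul h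

end TwistedPosDef

lemma isClosed_setOf_twistedPosDef (g : (Fin d → ℝ) → ℂ) :
    IsClosed {Δ : Matrix (Fin d) (Fin d) ℝ | TwistedPosDef Δ g} := by
  simp only [TwistedPosDef, Set.ofPred_forall]
  refine isClosed_iInter fun N => isClosed_iInter fun ξ => isClosed_iInter fun c =>
    isClosed_le continuous_const ?_
  fun_prop

section Asymptotics

open Asymptotics Topology

-- The Frobenius norm is submultiplicative and invariant under transposition.
attribute [local instance] Matrix.frobeniusNormedAddCommGroup Matrix.frobeniusNormedRing
  Matrix.frobeniusNormedAlgebra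

lemma isBigO_congrDefect {n α : Type*} [Fintype n] [DecidableEq n] {l : Filter α}
    {S P : α → Matrix n n ℝ} {g h : α → ℝ}
    (hP : P =O[l] g) (hS : (fun x => S x - 1) =O[l] h) (hS₁ : S =O[l] fun _ => (1 : ℝ)) :
    (fun x => congrDefect (S x) (P x)) =O[l] fun x => g x * h x := by
  have hSt : (fun x => (S x - 1)ᵀ) =O[l] h :=
    isBigO_norm_left.mp (by simpa only [Matrix.frobenius_norm_transpose] using hS.norm_left)
  have hsplit : ∀ x, congrDefect (S x) (P x) = -(P x * (S x - 1) + (S x - 1)ᵀ * P x * S x) := by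
    intro x
    simp only [congrDefect, Matrix.transpose_sub, Matrix.transpose_one]
    noncomm_ring
  have hsecond : (fun x => (S x - 1)ᵀ * P x * S x) =O[l] fun x => g x * h x :=
    ((hSt.mul hP).mul hS₁).congr_right fun x => by ring
  simpa only [hsplit] using ((hP.mul hS).add hsecond).neg_left

lemma isBigO_expm_sub_one (Z : Matrix (Fin d) (Fin d) ℝ) :
    (fun s => expm Z s - 1) =O[𝓝 0] fun s => s := by
  have h := (hasDerivAt_exp_smul_const (𝕂 := ℝ) Z 0).isBigO_sub
  simp only [zero_smul, NormedSpace.exp_zero, sub_zero] at h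
  exact h

lemma continuous_expm (Z : Matrix (Fin d) (Fin d) ℝ) : Continuous (expm Z) :=
  NormedSpace.exp_continuous.comp (continuous_id.smul continuous_const)

lemma isBigO_congrDefect_congrDefect_expm (Z σ : Matrix (Fin d) (Fin d) ℝ) :
    (fun s => congrDefect (expm Z s) (congrDefect (expm Z s) σ)) =O[𝓝 0] fun s => s ^ 2 := by
  have hS₁ := ((continuous_expm Z).tendsto 0).isBigO_one ℝ
  have hΔ := isBigO_congrDefect (isBigO_const_const σ one_ne_zero (𝓝 0)) (isBigO_expm_sub_one Z) hS₁
  simpa [sq] using isBigO_congrDefect hΔ (isBigO_expm_sub_one Z) hS₁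

lemma tendsto_sum_transpose_mul_mul_expm (Z : Matrix (Fin d) (Fin d) ℝ)
    {D : ℝ → Matrix (Fin d) (Fin d) ℝ} (hD : D =O[𝓝 0] fun s => s ^ 2) {t : ℝ} (ht : 0 ≤ t) :
    Tendsto (fun m : ℕ => ∑ i ∈ Finset.range m,
      (expm Z (i * (t / m)))ᵀ * D (t / (2 * m)) * expm Z (i * (t / m))) atTop (𝓝 0) := by
  obtain ⟨K, hK⟩ := (isCompact_Icc (a := 0) (b := t)).exists_bound_of_continuousOn
    (continuous_expm Z).continuousOn
  have hK₀ : 0 ≤ K := (norm_nonneg _).trans (hK 0 ⟨le_rfl, ht⟩)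
  obtain ⟨C, hC⟩ := hD.bound
  have hs : Tendsto (fun m : ℕ => t / (2 * m)) atTop (𝓝 0) := by
    simpa only [div_div] using tendsto_const_div_atTop_nhds_zero_nat (t / 2)
  refine squeeze_zero_norm' ?_ (tendsto_const_div_atTop_nhds_zero_nat (K ^ 2 * C * t ^ 2 / 4))
  filter_upwards [hs.eventually hC, eventually_ge_atTop 1] with m hDm hm
  have hm₀ : (0 : ℝ) < m := by exact_mod_cast hm
  have hSm : ∀ i ∈ Finset.range m, ‖expm Z (i * (t / m))‖ ≤ K := fun i hi =>
    hK _ ⟨by positivity, by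
      rw [mul_div_assoc', div_le_iff₀ hm₀, mul_comm]
      exact mul_le_mul_of_nonneg_left (by exact_mod_cast (Finset.mem_range.mp hi).le) ht⟩
  calc ‖∑ i ∈ Finset.range m, (expm Z (i * (t / m)))ᵀ * D (t / (2 * m)) * expm Z (i * (t / m))‖
      ≤ ∑ i ∈ Finset.range m, K * (C * ‖(t / (2 * m)) ^ 2‖) * K := by
        refine norm_sum_le_of_le _ fun i hi => norm_mul₃_le.trans ?_
        rw [Matrix.frobenius_norm_transpose]
        have hC₀ : 0 ≤ C * ‖(t / (2 * m)) ^ 2‖ := (norm_nonneg _).trans hDm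
        gcongr <;> exact hSm i hi
    _ = K ^ 2 * C * t ^ 2 / 4 / m := by
        rw [Finset.sum_const, Finset.card_range, nsmul_eq_mul, Real.norm_eq_abs,
          abs_of_nonneg (by positivity)]
        field_simp
        ring

end Asymptotics

section Semigroup

variable {Z : Matrix (Fin d) (Fin d) ℝ} {f : ℝ → (Fin d → ℝ) → ℂ}

lemma twistedPosDef_add_self
    (hprod : ∀ s t : ℝ, 0 ≤ s → 0 ≤ t → ∀ ξ : Fin d → ℝ,
      f (t + s) ξ = f s ((expm Z t).mulVec ξ) * f t ξ)
    {s : ℝ} (hs : 0 ≤ s) {Δ : Matrix (Fin d) (Fin d) ℝ} (hΔ : Δᵀ = -Δ)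
    (h : TwistedPosDef Δ (f s)) :
    TwistedPosDef (congrDefect (expm Z s) Δ) (f (s + s)) := by
  convert h.comp_mulVec_mul_self hΔ (expm Z s) using 1
  exact funext (hprod s s hs hs)

lemma twistedPosDef_nat_mul (hfinit : ∀ ξ : Fin d → ℝ, f 0 ξ = 1)
    (hprod : ∀ s t : ℝ, 0 ≤ s → 0 ≤ t → ∀ ξ : Fin d → ℝ,
      f (t + s) ξ = f s ((expm Z t).mulVec ξ) * f t ξ)
    {r : ℝ} (hr : 0 ≤ r) {D : Matrix (Fin d) (Fin d) ℝ} (h : TwistedPosDef D (f r)) (n : ℕ) :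
    TwistedPosDef (∑ i ∈ Finset.range n, (expm Z (i * r))ᵀ * D * expm Z (i * r))
      (f (n * r)) := by
  induction n with
  | zero =>
    simp only [Finset.sum_range_zero, Nat.cast_zero, zero_mul]
    convert twistedPosDef_zero_one (d := d) using 1
    exact funext hfinit
  | succ n ih =>
    have hstep : f ((n + 1 : ℕ) * r) = (fun ξ => f r (expm Z (n * r) *ᵥ ξ)) * f (n * r) := by
      funext ξ
      rw [Nat.cast_succ, add_one_mul, hprod r _ hr (by positivity)]
      rfl
    rw [Finset.sum_range_succ, add_comm, hstep]
    exact (h.comp_mulVec _).mul ih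

end Semigroup

end

theorem stmt3_general (d : ℕ) (Z σ : Matrix (Fin d) (Fin d) ℝ) (hσ : σᵀ = -σ)
    (f : ℝ → (Fin d → ℝ) → ℂ)
    (hfinit : ∀ ξ : Fin d → ℝ, f 0 ξ = 1)
    (hprod : ∀ s t : ℝ, 0 ≤ s → 0 ≤ t → ∀ ξ : Fin d → ℝ,
      f (t + s) ξ = f s ((expm Z t).mulVec ξ) * f t ξ)
    (htw : ∀ t : ℝ, 0 ≤ t →
      TwistedPosDef (σ - (expm Z t)ᵀ * σ * expm Z t) (f t)) :
    ∀ t : ℝ, 0 ≤ t → ∀ (N : ℕ) (ξ : Fin N → (Fin d → ℝ)) (c : Fin N → ℂ),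
      0 ≤ ∑ k : Fin N, ∑ l : Fin N, (starRingEnd ℂ) (c k) * f t (ξ l - ξ k) * c l := by
  intro t ht N ξ c
  have hlim : TwistedPosDef 0 (f t) := by
    refine (isClosed_setOf_twistedPosDef (f t)).mem_of_tendsto
      (tendsto_sum_transpose_mul_mul_expm Z (isBigO_congrDefect_congrDefect_expm Z σ) ht) ?_
    filter_upwards [eventually_ge_atTop 1] with m hm
    have hm₀ : (m : ℝ) ≠ 0 := by positivity
    have hs : 0 ≤ t / (2 * m) := by positivity
    have hhalf : t / (2 * m) + t / (2 * m) = t / m := by field_simp; ring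
    have hΔ : (congrDefect (expm Z (t / (2 * m))) σ)ᵀ = -congrDefect (expm Z (t / (2 * m))) σ := by
      rw [transpose_congrDefect, hσ, congrDefect_neg]
    have hstep := twistedPosDef_add_self hprod hs hΔ (htw _ hs)
    rw [hhalf] at hstep
    simpa [mul_div_cancel₀ t hm₀] using twistedPosDef_nat_mul hfinit hprod (by positivity) hstep m
  simpa using hlim N ξ c

/-- if every `f_t` is twisted positive definite with respect to
`σ - S_tᵀ σ S_t`, then every `f_t` is positive definite. -/
theorem stmt3 (d : ℕ) (hd : 0 < d) (Z σ : Matrix (Fin d) (Fin d) ℝ) (hσ : σᵀ = -σ)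
    (f : ℝ → (Fin d → ℝ) → ℂ)
    (hfcont : ContinuousOn (fun p : ℝ × (Fin d → ℝ) => f p.1 p.2) {p | 0 ≤ p.1})
    (hfinit : ∀ ξ : Fin d → ℝ, f 0 ξ = 1)
    (hfnorm : ∀ t : ℝ, 0 ≤ t → f t 0 = 1)
    (hprod : ∀ s t : ℝ, 0 ≤ s → 0 ≤ t → ∀ ξ : Fin d → ℝ,
      f (t + s) ξ = f s ((expm Z t).mulVec ξ) * f t ξ)
    (htw : ∀ t : ℝ, 0 ≤ t →
      TwistedPosDef (σ - (expm Z t)ᵀ * σ * expm Z t) (f t)) :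
    ∀ t : ℝ, 0 ≤ t → ∀ (N : ℕ) (ξ : Fin N → (Fin d → ℝ)) (c : Fin N → ℂ),
      0 ≤ ∑ k : Fin N, ∑ l : Fin N, (starRingEnd ℂ) (c k) * f t (ξ l - ξ k) * c l :=
  stmt3_general d Z σ hσ f hfinit hprod htw
end

section
/- Let Z be a real d×d matrix, set S_t := exp(tZ), and let f : [0,∞) × ℝ^d → ℂ be jointly continuous with f_0(ξ) = 1 and f_t(0) = 1 for all t ≥ 0, ξ ∈ ℝ^d, satisfying the product formula f_{t+s}(ξ) = f_s(S_t ξ) · f_t(ξ); assume further that for all t, s ≥ 0 the function ξ ↦ f_t(S_s ξ) is the characteristic function of some probability measure on ℝ^d. Then f_t(ξ) ≠ 0 for all t ≥ 0 and ξ ∈ ℝ^d, and there is a unique jointly continuous function Ψ : [0,∞) × ℝ^d → ℂ such that exp(Ψ_t(ξ)) = f_t(ξ) for all t, ξ and Ψ_0(0) = 0; moreover this Ψ satisfies Ψ_0(ξ) = 0 for all ξ and Ψ_t(0) = 0 for all t. -/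
open MeasureTheory Matrix Filter ComplexOrder

/-!
The cocycle identity gives `f_t(ξ) = ∏_{k<n} f_{t/n}(S_{kt/n} ξ)`; for `n` large every factor
is close to `f_0 = 1`, by continuity uniformly over the compact orbit segment
`{S_s ξ : 0 ≤ s ≤ t}`, so `f_t(ξ) ≠ 0`. Since `exp : ℂ → ℂ \ {0}` is a covering map and the
half-space `[0, ∞) × ℝ^d` is convex, hence simply connected, the nonvanishing `f` lifts to a
continuous logarithm. Two continuous logarithms differ by a continuous function with values in
`2πiℤ`, hence by a constant on every connected set: this gives uniqueness, `Ψ_0 = 0` on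
`{0} × ℝ^d` and `Ψ_t(0) = 0` on `[0, ∞) × {0}`.
-/

open Set Topology

namespace Complex

theorem eqOn_of_exp_eq_of_isPreconnected {X : Type*} [TopologicalSpace X] {S : Set X}
    (hS : IsPreconnected S) {g h : X → ℂ} (hg : ContinuousOn g S) (hh : ContinuousOn h S)
    (hexp : ∀ x ∈ S, exp (g x) = exp (h x)) {x₀ : X} (hx₀ : x₀ ∈ S) (h₀ : g x₀ = h x₀) :
    EqOn g h S := by
  have hmaps : MapsTo (g - h) S (AddSubgroup.zmultiples (2 * Real.pi * I) : Set ℂ) := by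
    intro x hx
    obtain ⟨n, hn⟩ := exp_eq_exp_iff_exists_int.mp (hexp x hx)
    exact ⟨n, by simp [hn, zsmul_eq_mul]⟩
  intro x hx
  have := hS.constant_of_mapsTo
    (isDiscrete_iff_discreteTopology.mpr (NormedSpace.discreteTopology_zmultiples _))
    (hg.sub hh) hmaps hx hx₀
  simpa [h₀, sub_eq_zero] using this

theorem _root_.Convex.exists_continuousOn_exp_eq {E : Type*} [NormedAddCommGroup E]
    [NormedSpace ℝ E] {S : Set E} (hS : Convex ℝ S) {f : E → ℂ} (hf : ContinuousOn f S)
    (hne : ∀ x ∈ S, f x ≠ 0) {x₀ : E} (hx₀ : x₀ ∈ S) {z₀ : ℂ} (hz₀ : exp z₀ = f x₀) :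
    ∃ g : E → ℂ, ContinuousOn g S ∧ (∀ x ∈ S, exp (g x) = f x) ∧ g x₀ = z₀ := by
  classical
  have := hS.contractibleSpace ⟨x₀, hx₀⟩
  have := hS.locallyPathConnectedSpace
  obtain ⟨G, ⟨hG₀, hGexp⟩, -⟩ := isCoveringMapOn_exp.existsUnique_continuousMap_lifts
    ⟨S.domRestrict f, continuousOn_iff_continuous_domRestrict.mp hf⟩ (a₀ := ⟨x₀, hx₀⟩) hz₀
    (fun x => hne x x.2)
  refine ⟨fun x => if hx : x ∈ S then G ⟨x, hx⟩ else 0, ?_, fun x hx => ?_, by simpa [hx₀]⟩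
  · rw [continuousOn_iff_continuous_domRestrict]
    convert G.continuous
    ext x
    simp
  · simpa [hx] using congrFun hGexp ⟨x, hx⟩

end Complex

theorem continuous_expm_mulVec {d : ℕ} (Z : Matrix (Fin d) (Fin d) ℝ) (ξ : Fin d → ℝ) :
    Continuous fun t : ℝ => (expm Z t).mulVec ξ := by
  let := Matrix.linftyOpNormedRing (n := Fin d) (α := ℝ)
  let := Matrix.linftyOpNormedAlgebra (n := Fin d) (α := ℝ) (R := ℝ)
  let : NormedAlgebra ℚ (Matrix (Fin d) (Fin d) ℝ) := NormedAlgebra.restrictScalars ℚ ℝ _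
  exact (NormedSpace.exp_continuous.comp (continuous_id.smul continuous_const)).matrix_mulVec
    continuous_const

section Cocycle

variable {d : ℕ} {Z : Matrix (Fin d) (Fin d) ℝ} {f : ℝ → (Fin d → ℝ) → ℂ}

theorem apply_nat_mul_eq_prod (hfinit : ∀ ξ, f 0 ξ = 1)
    (hprod : ∀ s t : ℝ, 0 ≤ s → 0 ≤ t → ∀ ξ : Fin d → ℝ,
      f (t + s) ξ = f s ((expm Z t).mulVec ξ) * f t ξ)
    {h : ℝ} (hh : 0 ≤ h) (n : ℕ) (ξ : Fin d → ℝ) :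
    f (n * h) ξ = ∏ k ∈ Finset.range n, f h ((expm Z (k * h)).mulVec ξ) := by
  induction n with
  | zero => simp [hfinit]
  | succ n ih =>
    rw [Finset.prod_range_succ, ← ih, Nat.cast_succ, add_one_mul,
      hprod h (n * h) hh (by positivity), mul_comm]

theorem eventually_forall_mem_ne_zero
    (hfcont : ContinuousOn (fun p : ℝ × (Fin d → ℝ) => f p.1 p.2) {p | 0 ≤ p.1})
    (hfinit : ∀ ξ, f 0 ξ = 1) {K : Set (Fin d → ℝ)} (hK : IsCompact K) :
    ∀ᶠ t in 𝓝 (0 : ℝ), ∀ η ∈ K, 0 ≤ t → f t η ≠ 0 := by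
  refine hK.eventually_forall_of_forall_eventually fun η _ => ?_
  have hcont := hfcont (0, η) (le_refl (0 : ℝ))
  have : ∀ᶠ p in 𝓝[{p : ℝ × (Fin d → ℝ) | 0 ≤ p.1}] (0, η), f p.1 p.2 ≠ 0 :=
    hcont.eventually_ne (by simp [hfinit])
  exact eventually_nhdsWithin_iff.mp this

theorem ne_zero_of_cocycle
    (hfcont : ContinuousOn (fun p : ℝ × (Fin d → ℝ) => f p.1 p.2) {p | 0 ≤ p.1})
    (hfinit : ∀ ξ, f 0 ξ = 1)
    (hprod : ∀ s t : ℝ, 0 ≤ s → 0 ≤ t → ∀ ξ : Fin d → ℝ,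
      f (t + s) ξ = f s ((expm Z t).mulVec ξ) * f t ξ)
    {t : ℝ} (ht : 0 ≤ t) (ξ : Fin d → ℝ) : f t ξ ≠ 0 := by
  set K := (fun s => (expm Z s).mulVec ξ) '' Icc 0 t
  have hK : IsCompact K := isCompact_Icc.image (continuous_expm_mulVec Z ξ)
  obtain ⟨n, hn, hsmall⟩ := ((eventually_ge_atTop 1).and
    ((tendsto_const_div_atTop_nhds_zero_nat t).eventually
      (eventually_forall_mem_ne_zero hfcont hfinit hK))).exists
  have hn0 : (n : ℝ) ≠ 0 := by positivity
  rw [← mul_div_cancel₀ t hn0, apply_nat_mul_eq_prod hfinit hprod (by positivity)]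
  refine Finset.prod_ne_zero_iff.mpr fun k hk => hsmall _ ⟨k * (t / n), ⟨by positivity, ?_⟩, rfl⟩
    (by positivity)
  have hkn : (k : ℝ) / n ≤ 1 :=
    (div_le_one (by positivity)).mpr (by exact_mod_cast (Finset.mem_range.mp hk).le)
  rw [mul_div_left_comm]
  exact mul_le_of_le_one_right ht hkn

end Cocycle

theorem stmt7_general (d : ℕ) (Z : Matrix (Fin d) (Fin d) ℝ)
    (f : ℝ → (Fin d → ℝ) → ℂ)
    (hfcont : ContinuousOn (fun p : ℝ × (Fin d → ℝ) => f p.1 p.2) {p | 0 ≤ p.1})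
    (hfinit : ∀ ξ : Fin d → ℝ, f 0 ξ = 1)
    (hfnorm : ∀ t : ℝ, 0 ≤ t → f t 0 = 1)
    (hprod : ∀ s t : ℝ, 0 ≤ s → 0 ≤ t → ∀ ξ : Fin d → ℝ,
      f (t + s) ξ = f s ((expm Z t).mulVec ξ) * f t ξ) :
    (∀ t : ℝ, 0 ≤ t → ∀ ξ : Fin d → ℝ, f t ξ ≠ 0) ∧
    ∃ Ψ : ℝ → (Fin d → ℝ) → ℂ,
      ContinuousOn (fun p : ℝ × (Fin d → ℝ) => Ψ p.1 p.2) {p | 0 ≤ p.1} ∧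
      (∀ t : ℝ, 0 ≤ t → ∀ ξ : Fin d → ℝ, Complex.exp (Ψ t ξ) = f t ξ) ∧
      Ψ 0 0 = 0 ∧
      (∀ ξ : Fin d → ℝ, Ψ 0 ξ = 0) ∧
      (∀ t : ℝ, 0 ≤ t → Ψ t 0 = 0) ∧
      (∀ Ψ' : ℝ → (Fin d → ℝ) → ℂ,
        ContinuousOn (fun p : ℝ × (Fin d → ℝ) => Ψ' p.1 p.2) {p | 0 ≤ p.1} →
        (∀ t : ℝ, 0 ≤ t → ∀ ξ : Fin d → ℝ, Complex.exp (Ψ' t ξ) = f t ξ) →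
        Ψ' 0 0 = 0 →
        ∀ t : ℝ, 0 ≤ t → ∀ ξ : Fin d → ℝ, Ψ' t ξ = Ψ t ξ) := by
  have hH : Convex ℝ {p : ℝ × (Fin d → ℝ) | 0 ≤ p.1} :=
    convex_halfSpace_ge (LinearMap.fst ℝ ℝ (Fin d → ℝ)).isLinear 0
  have hnv : ∀ t : ℝ, 0 ≤ t → ∀ ξ : Fin d → ℝ, f t ξ ≠ 0 := fun t ht ξ =>
    ne_zero_of_cocycle hfcont hfinit hprod ht ξ
  obtain ⟨G, hGcont, hGexp, hG0⟩ := hH.exists_continuousOn_exp_eq hfcont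
    (fun p hp => hnv p.1 hp p.2) (x₀ := (0, 0)) (le_refl (0 : ℝ)) (z₀ := 0) (by simp [hfinit])
  refine ⟨hnv, fun t ξ => G (t, ξ), hGcont, fun t ht ξ => hGexp (t, ξ) ht, hG0, fun ξ => ?_,
    fun t ht => ?_, fun Ψ' hΨ'cont hΨ'exp hΨ'0 t ht ξ => ?_⟩
  · refine Complex.eqOn_of_exp_eq_of_isPreconnected isPreconnected_univ
      (g := fun ξ => G (0, ξ)) (h := 0)
      (hGcont.comp_continuous (by fun_prop) fun _ => le_refl (0 : ℝ)).continuousOn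
      continuousOn_const (fun ξ _ => ?_) (mem_univ 0) hG0 (mem_univ ξ)
    simp [hGexp (0, ξ) (le_refl (0 : ℝ)), hfinit]
  · refine Complex.eqOn_of_exp_eq_of_isPreconnected (isPreconnected_Ici (a := (0 : ℝ)))
      (g := fun t => G (t, 0)) (h := 0)
      (hGcont.comp (by fun_prop) fun _ ht => ht) continuousOn_const
      (fun t ht => ?_) self_mem_Ici hG0 ht
    simp [hGexp (t, 0) ht, hfnorm t ht]
  · refine Complex.eqOn_of_exp_eq_of_isPreconnected hH.isPreconnected hΨ'cont hGcont
      (fun p hp => ?_) (x₀ := (0, 0)) (le_refl (0 : ℝ)) (hΨ'0.trans hG0.symm)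
      (show 0 ≤ (t, ξ).1 from ht)
    rw [hΨ'exp p.1 hp p.2, hGexp p hp]

/-- `f_t` never vanishes and admits a unique jointly continuous logarithm `Ψ`
normalized by `Ψ_0(0) = 0`; moreover `Ψ_0 = 0` and `Ψ_t(0) = 0`. -/
theorem stmt7 (d : ℕ) (hd : 0 < d) (Z : Matrix (Fin d) (Fin d) ℝ)
    (f : ℝ → (Fin d → ℝ) → ℂ)
    (hfcont : ContinuousOn (fun p : ℝ × (Fin d → ℝ) => f p.1 p.2) {p | 0 ≤ p.1})
    (hfinit : ∀ ξ : Fin d → ℝ, f 0 ξ = 1)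
    (hfnorm : ∀ t : ℝ, 0 ≤ t → f t 0 = 1)
    (hprod : ∀ s t : ℝ, 0 ≤ s → 0 ≤ t → ∀ ξ : Fin d → ℝ,
      f (t + s) ξ = f s ((expm Z t).mulVec ξ) * f t ξ)
    (hcf : ∀ t s : ℝ, 0 ≤ t → 0 ≤ s →
      ∃ ρ : Measure (Fin d → ℝ), IsProbabilityMeasure ρ ∧
        ∀ ξ : Fin d → ℝ, charFun ρ ξ = f t ((expm Z s).mulVec ξ)) :
    (∀ t : ℝ, 0 ≤ t → ∀ ξ : Fin d → ℝ, f t ξ ≠ 0) ∧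
    ∃ Ψ : ℝ → (Fin d → ℝ) → ℂ,
      ContinuousOn (fun p : ℝ × (Fin d → ℝ) => Ψ p.1 p.2) {p | 0 ≤ p.1} ∧
      (∀ t : ℝ, 0 ≤ t → ∀ ξ : Fin d → ℝ, Complex.exp (Ψ t ξ) = f t ξ) ∧
      Ψ 0 0 = 0 ∧
      (∀ ξ : Fin d → ℝ, Ψ 0 ξ = 0) ∧
      (∀ t : ℝ, 0 ≤ t → Ψ t 0 = 0) ∧
      (∀ Ψ' : ℝ → (Fin d → ℝ) → ℂ,
        ContinuousOn (fun p : ℝ × (Fin d → ℝ) => Ψ' p.1 p.2) {p | 0 ≤ p.1} →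
        (∀ t : ℝ, 0 ≤ t → ∀ ξ : Fin d → ℝ, Complex.exp (Ψ' t ξ) = f t ξ) →
        Ψ' 0 0 = 0 →
        ∀ t : ℝ, 0 ≤ t → ∀ ξ : Fin d → ℝ, Ψ' t ξ = Ψ t ξ) :=
  stmt7_general d Z f hfcont hfinit hfnorm hprod
end
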